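/- Let γ be a gauge on ℝ^d, x, x* ∈ ℝ^d with x* ≠ 0. The following are equivalent: (a) x*/γ°(x*) ∈ ∂γ(x); (b) ⟨x*, x⟩ = γ°(x*) γ(x); (c) ⟨x*, x⟩ ≥ 0 and x ⊥_B h for all h with ⟨x*, h⟩ = 0; (d) the linear functional ⟨x*, ·⟩ attains its maximum over the ball {z : γ(z) ≤ γ(x)} at x. -/

import Mathlib

/-!
The polar value `p = γ°(x*)` is the least `l > 0` with `⟪x*, y⟫ ≤ l γ(y)` for all `y`, so
`⟪x*, x⟫ ≤ p γ(x)` always, and (a), (b), (d) each say that equality holds. Conditions (c) and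
(d) both yield `⟪x*, y⟫ γ(x) ≤ ⟪x*, x⟫ γ(y)` for every `y`: for (d) rescale `y` to the level
`γ(x)`; for (c) note that `x - (⟪x*, x⟫ / ⟪x*, y⟫) y` is orthogonal to `x*`. That inequality
says `⟪x*, x⟫ / γ(x)` is admissible in the definition of the polar, whence `p γ(x) ≤ ⟪x*, x⟫`.
-/

open scoped RealInnerProductSpace

noncomputable section

variable {d : ℕ}

/-- A gauge on ℝ^d: nonnegative, vanishing only at 0, positively homogeneous, subadditive. -/
def IsGauge (γ : EuclideanSpace ℝ (Fin d) → ℝ) : Prop :=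
  (∀ x, 0 ≤ γ x) ∧ (∀ x, γ x = 0 → x = 0) ∧
  (∀ (x : EuclideanSpace ℝ (Fin d)) (l : ℝ), 0 < l → γ (l • x) = l * γ x) ∧
  (∀ x y, γ (x + y) ≤ γ x + γ y)

/-- The polar function of a gauge. -/
def polarGauge (γ : EuclideanSpace ℝ (Fin d) → ℝ) : EuclideanSpace ℝ (Fin d) → ℝ :=
  fun xs => sInf {l : ℝ | 0 < l ∧ ∀ x, ⟪xs, x⟫ ≤ l * γ x}

/-- The ε-subdifferential of f at x. -/
def epsSubdiff (f : EuclideanSpace ℝ (Fin d) → ℝ) (ε : ℝ) (x : EuclideanSpace ℝ (Fin d)) :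
    Set (EuclideanSpace ℝ (Fin d)) :=
  {xs | ∀ y, ⟪xs, y - x⟫ ≤ f y - f x + ε}

/-- ε-Birkhoff orthogonality: x ⊥_B^ε y iff γ x ≤ γ (x + λ y) + ε for all λ. -/
def BirkhoffEps (γ : EuclideanSpace ℝ (Fin d) → ℝ) (ε : ℝ)
    (x y : EuclideanSpace ℝ (Fin d)) : Prop :=
  ∀ l : ℝ, γ x ≤ γ (x + l • y) + ε

/-- The ε-directional derivative of f at x in direction y. -/
def epsDirDeriv (f : EuclideanSpace ℝ (Fin d) → ℝ) (ε : ℝ)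
    (x y : EuclideanSpace ℝ (Fin d)) : ℝ :=
  sInf {q : ℝ | ∃ l : ℝ, 0 < l ∧ q = (f (x + l • y) - f x + ε) / l}

variable {γ : EuclideanSpace ℝ (Fin d) → ℝ}

lemma polarGauge_le {xs : EuclideanSpace ℝ (Fin d)} {l : ℝ} (hl : 0 < l)
    (h : ∀ y, ⟪xs, y⟫ ≤ l * γ y) : polarGauge γ xs ≤ l :=
  csInf_le ⟨0, fun _ hl' => hl'.1.le⟩ ⟨hl, h⟩

namespace IsGauge

variable (hγ : IsGauge γ)
include hγ

lemma nonneg (x : EuclideanSpace ℝ (Fin d)) : 0 ≤ γ x := hγ.1 x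

lemma eq_zero_of_map_eq_zero {x : EuclideanSpace ℝ (Fin d)} (hx : γ x = 0) : x = 0 := hγ.2.1 x hx

lemma pos_of_ne_zero {x : EuclideanSpace ℝ (Fin d)} (hx : x ≠ 0) : 0 < γ x :=
  (hγ.nonneg x).lt_of_ne fun h => hx (hγ.eq_zero_of_map_eq_zero h.symm)

lemma map_zero : γ 0 = 0 := by
  have h := hγ.2.2.1 0 2 two_pos
  rw [smul_zero] at h
  linarith

lemma map_smul_of_nonneg (x : EuclideanSpace ℝ (Fin d)) {l : ℝ} (hl : 0 ≤ l) :
    γ (l • x) = l * γ x := by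
  rcases hl.eq_or_lt with rfl | hl
  · rw [zero_smul, zero_mul, hγ.map_zero]
  · exact hγ.2.2.1 x l hl

lemma map_add_le (x y : EuclideanSpace ℝ (Fin d)) : γ (x + y) ≤ γ x + γ y := hγ.2.2.2 x y

lemma convexOn : ConvexOn ℝ Set.univ γ := by
  refine ⟨convex_univ, fun x _ y _ a b ha hb _ => ?_⟩
  calc γ (a • x + b • y) ≤ γ (a • x) + γ (b • y) := hγ.map_add_le _ _
    _ = a • γ x + b • γ y := by rw [hγ.map_smul_of_nonneg x ha, hγ.map_smul_of_nonneg y hb]; rfl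

lemma continuous : Continuous γ := hγ.convexOn.locallyLipschitz.continuous

lemma exists_pos_mul_norm_le : ∃ m > 0, ∀ y : EuclideanSpace ℝ (Fin d), m * ‖y‖ ≤ γ y := by
  obtain ⟨m, hm, hmle⟩ := (isCompact_sphere (0 : EuclideanSpace ℝ (Fin d)) 1).exists_forall_le'
    hγ.continuous.continuousOn fun y hy => hγ.pos_of_ne_zero (ne_zero_of_mem_unit_sphere ⟨y, hy⟩)
  refine ⟨m, hm, fun y => ?_⟩
  rcases eq_or_ne y 0 with rfl | hy
  · rw [norm_zero, mul_zero, hγ.map_zero]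
  have hny : 0 < ‖y‖ := norm_pos_iff.mpr hy
  have h := hmle (‖y‖⁻¹ • y) (by simpa using norm_smul_inv_norm (𝕜 := ℝ) hy)
  rw [hγ.map_smul_of_nonneg y (inv_nonneg.mpr hny.le)] at h
  calc m * ‖y‖ ≤ ‖y‖⁻¹ * γ y * ‖y‖ := by gcongr
    _ = γ y := by field_simp

lemma exists_inner_le_mul (xs : EuclideanSpace ℝ (Fin d)) :
    ∃ l > 0, ∀ y, ⟪xs, y⟫ ≤ l * γ y := by
  obtain ⟨m, hm, hmle⟩ := hγ.exists_pos_mul_norm_le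
  refine ⟨(‖xs‖ + 1) / m, by positivity, fun y => ?_⟩
  calc ⟪xs, y⟫ ≤ ‖xs‖ * ‖y‖ := real_inner_le_norm xs y
    _ ≤ (‖xs‖ + 1) * ‖y‖ := by gcongr; linarith
    _ = (‖xs‖ + 1) / m * (m * ‖y‖) := by field_simp
    _ ≤ (‖xs‖ + 1) / m * γ y := by gcongr; exact hmle y

lemma inner_le_polarGauge_mul (xs y : EuclideanSpace ℝ (Fin d)) :
    ⟪xs, y⟫ ≤ polarGauge γ xs * γ y := by
  rcases eq_or_ne y 0 with rfl | hy
  · rw [inner_zero_right, hγ.map_zero, mul_zero]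
  have hγy := hγ.pos_of_ne_zero hy
  suffices ⟪xs, y⟫ / γ y ≤ polarGauge γ xs by rwa [div_le_iff₀ hγy] at this
  obtain ⟨l, hl, hly⟩ := hγ.exists_inner_le_mul xs
  exact le_csInf ⟨l, hl, hly⟩ fun l' ⟨_, hl'⟩ => (div_le_iff₀ hγy).mpr (hl' y)

lemma polarGauge_pos {xs : EuclideanSpace ℝ (Fin d)} (hxs : xs ≠ 0) : 0 < polarGauge γ xs := by
  have h := hγ.inner_le_polarGauge_mul xs xs
  rw [real_inner_self_eq_norm_sq] at h
  have : 0 < ‖xs‖ ^ 2 := by positivity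
  exact pos_of_mul_pos_left (this.trans_le h) (hγ.nonneg xs)

variable {x xs : EuclideanSpace ℝ (Fin d)}

lemma inner_eq_polarGauge_mul_of_forall_inner_mul_le (hxs : xs ≠ 0)
    (h : ∀ y, ⟪xs, y⟫ * γ x ≤ ⟪xs, x⟫ * γ y) : ⟪xs, x⟫ = polarGauge γ xs * γ x := by
  refine le_antisymm (hγ.inner_le_polarGauge_mul xs x) ?_
  rcases eq_or_ne x 0 with rfl | hx
  · rw [inner_zero_right, hγ.map_zero, mul_zero]
  have hγx := hγ.pos_of_ne_zero hx
  have hc : 0 < ⟪xs, x⟫ := by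
    have h' := h xs
    rw [real_inner_self_eq_norm_sq] at h'
    have : 0 < ‖xs‖ ^ 2 * γ x := by positivity
    exact pos_of_mul_pos_left (this.trans_le h') (hγ.nonneg xs)
  have hp : polarGauge γ xs ≤ ⟪xs, x⟫ / γ x :=
    polarGauge_le (div_pos hc hγx) fun y => by
      rw [div_mul_eq_mul_div, le_div_iff₀ hγx]
      exact h y
  rwa [le_div_iff₀ hγx] at hp

lemma forall_inner_mul_le_of_isMaxOn (hx : IsMaxOn (⟪xs, ·⟫) {z | γ z ≤ γ x} x)
    (y : EuclideanSpace ℝ (Fin d)) :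
    ⟪xs, y⟫ * γ x ≤ ⟪xs, x⟫ * γ y := by
  rcases eq_or_ne y 0 with rfl | hy
  · rw [inner_zero_right, hγ.map_zero, zero_mul, mul_zero]
  have hγy := hγ.pos_of_ne_zero hy
  have hz := isMaxOn_iff.mp hx ((γ x / γ y) • y) (by
    rw [Set.mem_ofPred_eq, hγ.map_smul_of_nonneg y (div_nonneg (hγ.nonneg x) hγy.le),
      div_mul_cancel₀ _ hγy.ne'])
  rw [real_inner_smul_right, div_mul_eq_mul_div, div_le_iff₀ hγy] at hz
  linarith

lemma forall_inner_mul_le_of_forall_birkhoffEps (hx : 0 ≤ ⟪xs, x⟫)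
    (hB : ∀ h, ⟪xs, h⟫ = 0 → BirkhoffEps γ 0 x h) (y : EuclideanSpace ℝ (Fin d)) :
    ⟪xs, y⟫ * γ x ≤ ⟪xs, x⟫ * γ y := by
  rcases le_or_gt ⟪xs, y⟫ 0 with ht | ht
  · exact (mul_nonpos_of_nonpos_of_nonneg ht (hγ.nonneg x)).trans
      (mul_nonneg hx (hγ.nonneg y))
  set s := ⟪xs, x⟫ / ⟪xs, y⟫
  have horth : ⟪xs, s • y - x⟫ = 0 := by
    rw [inner_sub_right, real_inner_smul_right, div_mul_cancel₀ _ ht.ne', sub_self]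
  have h := hB _ horth 1
  rw [one_smul, add_sub_cancel, add_zero, hγ.map_smul_of_nonneg y (div_nonneg hx ht.le),
    div_mul_eq_mul_div, le_div_iff₀ ht] at h
  linarith

lemma polarGauge_inv_smul_mem_epsSubdiff_iff (hxs : xs ≠ 0) :
    (polarGauge γ xs)⁻¹ • xs ∈ epsSubdiff γ 0 x ↔ ⟪xs, x⟫ = polarGauge γ xs * γ x := by
  have hp := hγ.polarGauge_pos hxs
  simp only [epsSubdiff, Set.mem_ofPred_eq, add_zero, inner_sub_right, real_inner_smul_left]
  constructor
  · intro h
    have h0 := h 0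
    rw [inner_zero_right, hγ.map_zero, mul_zero, zero_sub, zero_sub, neg_le_neg_iff,
      le_inv_mul_iff₀ hp] at h0
    exact le_antisymm (hγ.inner_le_polarGauge_mul xs x) h0
  · intro hx y
    rw [hx, inv_mul_cancel_left₀ hp.ne', sub_le_sub_iff_right, inv_mul_le_iff₀ hp]
    exact hγ.inner_le_polarGauge_mul xs y

lemma birkhoffEps_zero_of_inner_eq (hxs : xs ≠ 0) (hx : ⟪xs, x⟫ = polarGauge γ xs * γ x)
    (h : EuclideanSpace ℝ (Fin d)) (hh : ⟪xs, h⟫ = 0) : BirkhoffEps γ 0 x h := by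
  intro l
  have hle := hγ.inner_le_polarGauge_mul xs (x + l • h)
  rw [inner_add_right, real_inner_smul_right, hh, mul_zero, add_zero, hx,
    mul_le_mul_iff_right₀ (hγ.polarGauge_pos hxs)] at hle
  rwa [add_zero]

end IsGauge

theorem subgradient_tfae_zero (γ : EuclideanSpace ℝ (Fin d) → ℝ) (hγ : IsGauge γ)
    (x xs : EuclideanSpace ℝ (Fin d)) (hxs : xs ≠ 0) :
    [(polarGauge γ xs)⁻¹ • xs ∈ epsSubdiff γ 0 x,
     ⟪xs, x⟫ = polarGauge γ xs * γ x,
     0 ≤ ⟪xs, x⟫ ∧ ∀ h : EuclideanSpace ℝ (Fin d), ⟪xs, h⟫ = 0 → BirkhoffEps γ 0 x h,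
     ∀ z : EuclideanSpace ℝ (Fin d), γ z ≤ γ x → ⟪xs, z⟫ ≤ ⟪xs, x⟫].TFAE := by
  tfae_have 1 ↔ 2 := hγ.polarGauge_inv_smul_mem_epsSubdiff_iff hxs
  tfae_have 2 → 3 := fun h =>
    ⟨h ▸ mul_nonneg (hγ.polarGauge_pos hxs).le (hγ.nonneg x),
      hγ.birkhoffEps_zero_of_inner_eq hxs h⟩
  tfae_have 3 → 2 := fun ⟨hx, hB⟩ =>
    hγ.inner_eq_polarGauge_mul_of_forall_inner_mul_le hxs
      (hγ.forall_inner_mul_le_of_forall_birkhoffEps hx hB)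
  tfae_have 2 → 4 := fun h z hz =>
    calc ⟪xs, z⟫ ≤ polarGauge γ xs * γ z := hγ.inner_le_polarGauge_mul xs z
      _ ≤ polarGauge γ xs * γ x := by gcongr; exact (hγ.polarGauge_pos hxs).le
      _ = ⟪xs, x⟫ := h.symm
  tfae_have 4 → 2 := fun h =>
    hγ.inner_eq_polarGauge_mul_of_forall_inner_mul_le hxs
      (hγ.forall_inner_mul_le_of_isMaxOn (isMaxOn_iff.mpr h))
  tfae_finish
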